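/- Let n and d be positive integers with n ≥ 2d + 2, and let B_{n,d} be the tree with n vertices obtained from the star K_{1,n−d−1} by attaching d new pendant vertices to one of the leaves of the star; let T(n,4) (for n ≥ 5) be the tree with n vertices obtained from the path v_1, …, v_5 by attaching n − 5 new pendant vertices to v_3. Then χ(B_{n,d}) = n − 2 + 2^d + 2^{n−d−2} + 2^{n−2}, and χ(T(n,4)) = n + 1 + 2^{n−2} + 2^{n−5}. -/

import Mathlib

/-!
Attaching `r` pendant vertices to a vertex `u` of `G`: a subtree that contains a pendant vertex is
either that vertex alone or contains `u`, and a subtree through `u` may take any subset of the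
pendants. Hence `χ = 2 ^ r · #{subtrees through u} + #{subtrees avoiding u} + r`. In a star the
subtrees are the singletons and the sets containing the centre, and in a path they are the
intervals, which makes both counts explicit.
-/

open SimpleGraph

/-- `S` is the vertex set of a subtree of `G`: a nonempty set of vertices
whose induced subgraph is connected. -/
def SimpleGraph.IsSubtree {V : Type*} (G : SimpleGraph V) (S : Finset V) : Prop :=
  S.Nonempty ∧ (G.induce (S : Set V)).Connected

/-- `χ(G)`: the number of subtrees of `G`. -/
noncomputable def SimpleGraph.subtreeCount {V : Type*} (G : SimpleGraph V) : ℕ :=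
  Nat.card {S : Finset V // G.IsSubtree S}

/-- The star with center `c`: `c` is adjacent to every other vertex, and there are
no other edges. -/
def starGraph {V : Type*} (c : V) : SimpleGraph V :=
  SimpleGraph.fromRel (fun a _ => a = c)

/-- The graph obtained from `G` by attaching `r` new pendant vertices to the vertex `u`. -/
def addPendants {V : Type*} (G : SimpleGraph V) (u : V) (r : ℕ) :
    SimpleGraph (V ⊕ Fin r) where
  Adj a b :=
    match a, b with
    | Sum.inl a, Sum.inl b => G.Adj a b
    | Sum.inl a, Sum.inr _ => a = u
    | Sum.inr _, Sum.inl b => b = u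
    | Sum.inr _, Sum.inr _ => False
  symm := ⟨by
    rintro (a | a) (b | b) h
    · exact h.symm
    · exact h
    · exact h
    · exact h⟩
  loopless := ⟨by
    rintro (a | a) h
    · exact G.loopless.irrefl a h
    · exact h⟩

open Finset

variable {V W : Type*}

theorem Nat.card_subtype_or_of_disjoint {α : Type*} [Finite α] {p q : α → Prop}
    (h : ∀ a, p a → ¬q a) :
    Nat.card {a // p a ∨ q a} = Nat.card {a // p a} + Nat.card {a // q a} := by
  classical
  rw [Nat.card_congr (subtypeOrEquiv p q (disjoint_iff_inf_le.mpr fun a ha => h a ha.1 ha.2)),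
    Nat.card_sum]

namespace SimpleGraph

theorem Reachable.map_of_eq_or_adj {G : SimpleGraph V} {H : SimpleGraph W} (f : V → W)
    (hf : ∀ ⦃x y⦄, G.Adj x y → f x = f y ∨ H.Adj (f x) (f y)) {x y : V}
    (h : G.Reachable x y) : H.Reachable (f x) (f y) := by
  rw [reachable_iff_reflTransGen] at h ⊢
  exact h.lift' f fun a b hab => (hf hab).elim (fun e => by rw [Function.onFun, e]) .single

theorem isSubtree_singleton (G : SimpleGraph V) (v : V) : G.IsSubtree {v} := by
  refine ⟨singleton_nonempty v, ?_⟩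
  rw [coe_singleton, induce_singleton_eq_top]
  exact connected_top

theorem IsSubtree.exists_adj {G : SimpleGraph V} {S : Finset V} (hS : G.IsSubtree S)
    {x y : V} (hx : x ∈ S) (hy : y ∈ S) (hxy : x ≠ y) : ∃ z ∈ S, G.Adj x z := by
  obtain ⟨w⟩ := hS.2.preconnected ⟨x, hx⟩ ⟨y, hy⟩
  cases w with
  | nil => exact absurd rfl hxy
  | @cons _ z _ h _ => exact ⟨z, z.2, h⟩

theorem IsSubtree.image [DecidableEq W] {G : SimpleGraph V} {H : SimpleGraph W}
    {S : Finset V} (hS : G.IsSubtree S) (f : V → W)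
    (hf : ∀ ⦃x y⦄, G.Adj x y → f x = f y ∨ H.Adj (f x) (f y)) :
    H.IsSubtree (S.image f) := by
  have hmaps (x : (S : Set V)) : f x ∈ (S.image f : Set W) := by
    simpa using mem_image_of_mem f x.2
  obtain ⟨x₀, hx₀⟩ := hS.1
  refine ⟨hS.1.image f,
    (connected_iff_exists_forall_reachable _).mpr ⟨⟨f x₀, hmaps ⟨x₀, hx₀⟩⟩, ?_⟩⟩
  rintro ⟨_, hy⟩
  obtain ⟨x, hx, rfl⟩ := mem_image.mp (mem_coe.mp hy)
  refine (hS.2.preconnected ⟨x₀, hx₀⟩ ⟨x, hx⟩).map_of_eq_or_adj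
    (fun y : (S : Set V) => (⟨f y, hmaps y⟩ : (S.image f : Set W))) fun a b hab => ?_
  simpa [Subtype.ext_iff] using hf hab

theorem IsSubtree.union [DecidableEq V] {G : SimpleGraph V} {S T : Finset V}
    (hS : G.IsSubtree S) (hT : ∀ t ∈ T, ∃ s ∈ S, G.Adj s t) : G.IsSubtree (S ∪ T) := by
  obtain ⟨s₀, hs₀⟩ := hS.1
  refine ⟨hS.1.mono subset_union_left, induce_connected_of_patches s₀ (by simp [hs₀]) ?_⟩
  intro v hv
  rcases mem_union.mp (mem_coe.mp hv) with hv | hv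
  · exact ⟨S, by simp, hs₀, hv, hS.2.preconnected _ _⟩
  · obtain ⟨s, hs, hsv⟩ := hT v hv
    refine ⟨S ∪ {v}, by simpa [Set.insert_subset_iff] using .inr hv, .inl hs₀, .inr rfl, ?_⟩
    have hv : (G.induce {v}).Preconnected := by
      rw [induce_singleton_eq_top]
      exact connected_top.preconnected
    exact (connected_induce_union hS.2.preconnected hv hs rfl hsv).preconnected _ _

theorem pathGraph_isSubtree_iff {n : ℕ} {S : Finset (Fin n)} :
    (pathGraph n).IsSubtree S ↔
      S.Nonempty ∧ ∀ a ∈ S, ∀ b ∈ S, ∀ x, a ≤ x → x ≤ b → x ∈ S := by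
  refine ⟨fun hS => ⟨hS.1, fun a ha b hb x hax hxb => ?_⟩,
    fun ⟨hne, hS⟩ => ⟨hne, ?_⟩⟩
  · by_contra hx
    -- `s < x` is constant along edges inside `S`: no edge jumps over `x ∉ S`
    have hreach := (hS.2.preconnected ⟨a, ha⟩ ⟨b, hb⟩).map_of_eq_or_adj (H := ⊥)
      (fun s : (S : Set (Fin n)) => (s : Fin n) < x) fun s t hst => .inl ?_
    · have hax' : a ≠ x := fun h => hx (h ▸ ha)
      simp only [reachable_bot, eq_iff_iff] at hreach
      exact (hxb.trans_lt (hreach.mp (lt_of_le_of_ne hax hax'))).false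
    · have hs : (s : Fin n) ≠ x := fun h => hx (h ▸ s.2)
      have ht : (t : Fin n) ≠ x := fun h => hx (h ▸ t.2)
      have hst' := pathGraph_adj.mp hst
      simp only [Function.Embedding.subtype_apply] at hst'
      simp only [eq_iff_iff, Fin.lt_def, ne_eq, Fin.ext_iff] at hs ht ⊢
      omega
  · have hstep (k : ℕ) : ∀ s t : (S : Set (Fin n)), (s : Fin n).val + k = (t : Fin n).val →
        (pathGraph n |>.induce (S : Set (Fin n))).Reachable s t := by
      induction k with
      | zero => exact fun s t h => (Subtype.ext (Fin.ext h) : s = t) ▸ .rfl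
      | succ k ih =>
        intro s t h
        let t' : Fin n := ⟨(t : Fin n).val - 1, by omega⟩
        have ht' : t' ∈ S := hS _ s.2 _ t.2 t' (Fin.le_def.mpr (by simp [t']; omega))
          (Fin.le_def.mpr (by simp [t']))
        refine (ih s ⟨t', ht'⟩ (by simp [t']; omega)).trans (Adj.reachable ?_)
        simp only [comap_adj, Function.Embedding.subtype_apply, pathGraph_adj, t']
        omega
    have : Nonempty (S : Set (Fin n)) := (coe_nonempty.mpr hne).to_subtype
    refine ⟨fun s t => ?_⟩
    rcases le_total (s : Fin n) t with h | h
    · exact hstep _ s t (Nat.add_sub_of_le h)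
    · exact (hstep _ t s (Nat.add_sub_of_le h)).symm

theorem starGraph_isSubtree_iff {c : V} {S : Finset V} :
    (starGraph c).IsSubtree S ↔ c ∈ S ∨ ∃ v, v ≠ c ∧ S = {v} := by
  classical
  constructor
  · intro hS
    by_contra! h
    obtain ⟨v, hv⟩ := hS.1
    obtain ⟨w, hw, hwv⟩ : ∃ w ∈ S, w ≠ v := by
      by_contra! hS_eq
      exact h.2 v (ne_of_mem_of_not_mem hv h.1) (eq_singleton_iff_unique_mem.mpr ⟨hv, hS_eq⟩)
    obtain ⟨z, hz, hvz⟩ := hS.exists_adj hv hw hwv.symm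
    rcases (starGraph_adj.mp hvz).2 with rfl | rfl
    exacts [h.1 hv, h.1 hz]
  · rintro (hc | ⟨v, -, rfl⟩)
    · rw [← insert_erase hc, insert_eq]
      exact (isSubtree_singleton _ c).union fun t ht =>
        ⟨c, mem_singleton_self c, starGraph_center_adj (ne_of_mem_erase ht).symm⟩
    · exact isSubtree_singleton _ v

variable [Fintype V] [DecidableEq V]

theorem starGraph_card_subtrees_mem {c u : V} (hcu : c ≠ u) :
    Nat.card {S : Finset V // (starGraph c).IsSubtree S ∧ u ∈ S} =
      1 + 2 ^ (Fintype.card V - 2) := by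
  have hS (S : Finset V) :
      (starGraph c).IsSubtree S ∧ u ∈ S ↔ S ∈ insert {u} (Icc {c, u} univ) := by
    simp only [starGraph_isSubtree_iff, mem_insert, mem_Icc, subset_univ, and_true,
      insert_subset_iff, singleton_subset_iff]
    grind
  rw [Nat.card_congr (Equiv.subtypeEquivRight hS), Nat.card_eq_finsetCard,
    card_insert_of_notMem (by simpa using hcu), card_Icc_finset (subset_univ _), card_univ,
    card_pair hcu, add_comm]

theorem starGraph_card_subtrees_not_mem {c u : V} (hcu : c ≠ u) :
    Nat.card {S : Finset V // (starGraph c).IsSubtree S ∧ u ∉ S} =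
      (Fintype.card V - 2) + 2 ^ (Fintype.card V - 2) := by
  have hS (S : Finset V) : (starGraph c).IsSubtree S ∧ u ∉ S ↔
      S ∈ ({c, u}ᶜ : Finset V).map ⟨singleton, singleton_injective⟩ ∪ Icc {c} {u}ᶜ := by
    simp only [starGraph_isSubtree_iff, mem_union, mem_map, mem_Icc, mem_compl, mem_insert,
      mem_singleton, singleton_subset_iff, subset_compl_singleton, Function.Embedding.coeFn_mk]
    grind
  have hdisj : Disjoint (({c, u}ᶜ : Finset V).map ⟨singleton, singleton_injective⟩)
      (Icc {c} {u}ᶜ) := by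
    rw [Finset.disjoint_left]
    simp only [mem_map, mem_Icc, mem_compl, mem_insert, mem_singleton, singleton_subset_iff,
      Function.Embedding.coeFn_mk]
    grind
  rw [Nat.card_congr (Equiv.subtypeEquivRight hS), Nat.card_eq_finsetCard,
    card_union_of_disjoint hdisj, card_map, card_compl, card_pair hcu,
    card_Icc_finset (by simpa using hcu.symm), card_compl, card_singleton, card_singleton,
    Nat.sub_sub]

end SimpleGraph

section addPendants

variable {G : SimpleGraph V} {u : V} {r : ℕ}

@[simp]
theorem addPendants_adj_inr_inl {p : Fin r} {b : V} :
    (addPendants G u r).Adj (.inr p) (.inl b) ↔ b = u := .rfl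

@[simp]
theorem addPendants_not_adj_inr_inr {p q : Fin r} : ¬(addPendants G u r).Adj (.inr p) (.inr q) :=
  id

variable [DecidableEq V]

theorem addPendants_isSubtree_toLeft {S : Finset (V ⊕ Fin r)}
    (hS : (addPendants G u r).IsSubtree S) (hu : S.toRight.Nonempty → u ∈ S.toLeft) :
    G.IsSubtree S.toLeft := by
  have hcollapse : S.image (Sum.elim id fun _ => u) = S.toLeft := by
    ext v
    simp only [mem_image, mem_toLeft]
    constructor
    · rintro ⟨v | p, hv, rfl⟩
      exacts [hv, mem_toLeft.mp (hu ⟨p, mem_toRight.mpr hv⟩)]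
    · exact fun hv => ⟨.inl v, hv, rfl⟩
  refine hcollapse ▸ hS.image _ ?_
  rintro (a | p) (b | q) hab
  exacts [.inr hab, .inl hab, .inl (Eq.symm hab), (addPendants_not_adj_inr_inr hab).elim]

theorem addPendants_isSubtree_iff (S : Finset (V ⊕ Fin r)) :
    (addPendants G u r).IsSubtree S ↔
      (G.IsSubtree S.toLeft ∧ u ∈ S.toLeft) ∨
        (G.IsSubtree S.toLeft ∧ u ∉ S.toLeft) ∧ S.toRight = ∅ ∨
        S.toLeft = ∅ ∧ #S.toRight = 1 := by
  constructor
  · intro hS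
    by_cases hu : u ∈ S.toLeft
    · exact .inl ⟨addPendants_isSubtree_toLeft hS fun _ => hu, hu⟩
    obtain hA | ⟨p, hp⟩ := S.toRight.eq_empty_or_nonempty
    · exact .inr (.inl ⟨⟨addPendants_isSubtree_toLeft hS (by simp [hA]), hu⟩, hA⟩)
    -- the only neighbour of a pendant vertex is `u ∉ S`, so it cannot have company in `S`
    have hS_eq : S = {.inr p} := by
      refine eq_singleton_iff_unique_mem.mpr ⟨mem_toRight.mp hp, fun t ht => ?_⟩
      by_contra hne
      obtain ⟨z | z, hz, hadj⟩ := hS.exists_adj (mem_toRight.mp hp) ht (Ne.symm hne)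
      · exact hu (mem_toLeft.mpr ((addPendants_adj_inr_inl.mp hadj) ▸ hz))
      · exact addPendants_not_adj_inr_inr hadj
    subst hS_eq
    refine .inr (.inr ⟨?_, ?_⟩)
    · ext
      simp
    · exact card_eq_one.mpr ⟨p, by ext; simp⟩
  · have hdecomp : S.toLeft.image .inl ∪ S.toRight.image .inr = S := by
      ext (v | p) <;> simp
    have hinl (B : Finset V) (hB : G.IsSubtree B) :
        (addPendants G u r).IsSubtree (B.image .inl) :=
      hB.image _ fun _ _ hab => .inr hab
    rintro (⟨hB, hu⟩ | ⟨⟨hB, -⟩, hA⟩ | ⟨hB, hA⟩)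
    · rw [← hdecomp]
      refine (hinl _ hB).union fun t ht => ⟨.inl u, mem_image_of_mem _ hu, ?_⟩
      obtain ⟨p, -, rfl⟩ := mem_image.mp ht
      rfl
    · rw [← hdecomp, hA, image_empty, union_empty]
      exact hinl _ hB
    · obtain ⟨p, hp⟩ := card_eq_one.mp hA
      rw [← hdecomp, hB, hp]
      exact isSubtree_singleton _ _

variable [Fintype V]

theorem subtreeCount_addPendants (G : SimpleGraph V) (u : V) (r : ℕ) :
    (addPendants G u r).subtreeCount =
      2 ^ r * Nat.card {B : Finset V // G.IsSubtree B ∧ u ∈ B} +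
        Nat.card {B : Finset V // G.IsSubtree B ∧ u ∉ B} + r := by
  rw [subtreeCount, Nat.card_congr (Equiv.subtypeEquiv (q := fun p =>
      (G.IsSubtree p.1 ∧ u ∈ p.1) ∨ (G.IsSubtree p.1 ∧ u ∉ p.1) ∧ p.2 = ∅ ∨
        p.1 = ∅ ∧ #p.2 = 1)
      sumEquiv.toEquiv addPendants_isSubtree_iff),
    Nat.card_subtype_or_of_disjoint (by grind), Nat.card_subtype_or_of_disjoint (by grind),
    Nat.card_congr (Equiv.prodSubtypeFstEquivSubtypeProd (β := Finset (Fin r))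
      (p := fun B => G.IsSubtree B ∧ u ∈ B)),
    Nat.card_congr (Equiv.subtypeProdEquivProd (p := fun B => G.IsSubtree B ∧ u ∉ B)
      (q := fun A : Finset (Fin r) => A = ∅)),
    Nat.card_congr (Equiv.subtypeProdEquivProd (p := fun B : Finset V => B = ∅)
      (q := fun A : Finset (Fin r) => #A = 1))]
  simp [Nat.card_eq_fintype_card, mul_comm, add_assoc]

end addPendants

theorem pathGraph_five_card_subtrees_mem :
    Nat.card {S : Finset (Fin 5) // (pathGraph 5).IsSubtree S ∧ ⟨2, by omega⟩ ∈ S} = 9 := by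
  simp_rw [pathGraph_isSubtree_iff, Nat.card_eq_fintype_card]
  decide

theorem pathGraph_five_card_subtrees_not_mem :
    Nat.card {S : Finset (Fin 5) // (pathGraph 5).IsSubtree S ∧ ⟨2, by omega⟩ ∉ S} = 6 := by
  simp_rw [pathGraph_isSubtree_iff, Nat.card_eq_fintype_card]
  decide

theorem starGraph_eq_simpleGraph_starGraph {V : Type*} (c : V) :
    _root_.starGraph c = SimpleGraph.starGraph c :=
  rfl

/-- Counting subtrees of `B_{n,d}` (the star `K_{1,n-d-1}` with `d` pendant vertices
attached to one of its leaves) and of `T(n,4)` (the path `v_1 … v_5` with `n - 5`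
pendant vertices attached to `v_3`): for `d ≥ 1` and `n ≥ 2d + 2`,
`χ(B_{n,d}) = n - 2 + 2^d + 2^(n-d-2) + 2^(n-2)`, and for `n ≥ 5`,
`χ(T(n,4)) = n + 1 + 2^(n-2) + 2^(n-5)`. -/
theorem subtreeCount_Bnd_and_Tn4 (n d : ℕ) (hn : 2 * d + 2 ≤ n) :
    (addPendants (_root_.starGraph (⟨0, by omega⟩ : Fin (n - d))) ⟨1, by omega⟩ d).subtreeCount =
        n - 2 + 2 ^ d + 2 ^ (n - d - 2) + 2 ^ (n - 2) ∧
      (5 ≤ n →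
        (addPendants (pathGraph 5) ⟨2, by omega⟩ (n - 5)).subtreeCount =
          n + 1 + 2 ^ (n - 2) + 2 ^ (n - 5)) := by
  constructor
  · have hcu : (⟨0, by omega⟩ : Fin (n - d)) ≠ ⟨1, by omega⟩ := by simp
    have hpow : 2 ^ d * 2 ^ (n - d - 2) = 2 ^ (n - 2) := by
      rw [← pow_add]
      congr 1
      omega
    rw [subtreeCount_addPendants, starGraph_eq_simpleGraph_starGraph,
      starGraph_card_subtrees_mem hcu, starGraph_card_subtrees_not_mem hcu, Fintype.card_fin,
      mul_add, mul_one, hpow]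
    omega
  · intro h5
    have hpow : 2 ^ (n - 2) = 2 ^ (n - 5) * 2 ^ 3 := by
      rw [← pow_add]
      congr 1
      omega
    rw [subtreeCount_addPendants, pathGraph_five_card_subtrees_mem,
      pathGraph_five_card_subtrees_not_mem, hpow]
    omega
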